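/- If T is copying T', rpl(T) = 1, and rpl(T') > 1, then T' has the pony-tail, i.e., the rightmost child of the root of T' has exactly one child and that child is a leaf. -/
import Mathlib


/-- An ordered (plane) tree: a root together with the list of subtrees of its
children.  The children are listed **rightmost first** (so the head of the
list is the rightmost child). -/
inductive OTree : Type
  | node : List OTree → OTree

namespace OTree

-- Number of vertices of an ordered tree.
mutual
  def size : OTree → ℕ
    | .node ts => 1 + sizeAux ts
  def sizeAux : List OTree → ℕ
    | [] => 0
    | t :: ts => size t + sizeAux ts
end

/-- `rpl T` is the number of edges of the rightmost path of `T`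
(the path from the root that always follows the rightmost child). -/
def rpl : OTree → ℕ
  | .node [] => 0
  | .node (t :: _) => 1 + rpl t

/-- `p T` removes the rightmost leaf of `T` (the endpoint of the rightmost
path).  On the one-vertex tree it is the identity (junk value). -/
def p : OTree → OTree
  | .node [] => .node []
  | .node (.node [] :: ts) => .node ts
  | .node (.node (c :: cs) :: ts) => .node (p (.node (c :: cs)) :: ts)

/-- `C T i` appends a new leaf as the rightmost child of the vertex at
level `i` on the rightmost path of `T` (the root has level 1).
Junk values are returned when `i = 0` or `i` exceeds `rpl T + 1`. -/
def C : OTree → ℕ → OTree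
  | t, 0 => t
  | .node ts, 1 => .node (.node [] :: ts)
  | .node [], _ + 2 => .node []
  | .node (t :: ts), n + 2 => .node (C t (n + 1) :: ts)

/-- The number of children of the parent of the rightmost leaf
(junk value `0` on the one-vertex tree, which has no such parent). -/
def rmlParentDeg : OTree → ℕ
  | .node [] => 0
  | .node (.node [] :: ts) => ts.length + 1
  | .node (.node (c :: cs) :: _) => rmlParentDeg (.node (c :: cs))

/-- `T` has the pony-tail if the rightmost child of the root has exactly one
child, which is a leaf. -/
def ponyTail : OTree → Prop
  | .node (.node [.node []] :: _) => True
  | _ => False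

end OTree

/-- `AppendLeaf T T'` holds when `T'` is obtained from `T` by attaching one
new leaf to some vertex of `T`, at some position among its children. -/
inductive AppendLeaf : OTree → OTree → Prop
  | root (l r : List OTree) :
      AppendLeaf (.node (l ++ r)) (.node (l ++ OTree.node [] :: r))
  | child (l r : List OTree) (t t' : OTree) :
      AppendLeaf t t' → AppendLeaf (.node (l ++ t :: r)) (.node (l ++ t' :: r))

/-- `DelApp T T'` holds when `T'` can be obtained from `T` by deleting one
leaf and then appending one new leaf somewhere (delete-and-append a leaf). -/
def DelApp (T T' : OTree) : Prop :=
  ∃ S : OTree, AppendLeaf S T ∧ AppendLeaf S T'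

/-- `CopyingAt T T' j` : `T` is copying `T'` at level `j`, i.e. `T'` is
obtained from `T` by appending a new leaf which becomes the rightmost leaf of
`T'` (namely forming `C T j`, whose rightmost path has `j` edges) and then
removing some other leaf. -/
def CopyingAt (T T' : OTree) (j : ℕ) : Prop :=
  T ≠ T' ∧ 1 ≤ j ∧ j ≤ T.rpl + 1 ∧ T'.rpl = j ∧ AppendLeaf T' (T.C j)

/-- `T` is copying `T'`. -/
def Copying (T T' : OTree) : Prop := ∃ j : ℕ, CopyingAt T T' j



lemma appendLeaf_inv {s : OTree} {us : List OTree} (h : AppendLeaf s (.node us)) :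
    (∃ l r, us = l ++ OTree.node [] :: r ∧ s = .node (l ++ r)) ∨
    (∃ l r t t', us = l ++ t' :: r ∧ s = .node (l ++ t :: r) ∧ AppendLeaf t t') := by
  cases h with
  | root l r => exact Or.inl ⟨l, r, rfl, rfl⟩
  | child l r t t' ht => exact Or.inr ⟨l, r, t, t', rfl, rfl, ht⟩

lemma appendLeaf_ne_nil (s : OTree) : ¬ AppendLeaf s (.node []) := by
  intro h
  rcases appendLeaf_inv h with ⟨l, r, h', -⟩ | ⟨l, r, t, t', h', -, -⟩ <;> simp at h'

/-- If `T` is copying `T'`, `rpl T = 1` and `rpl T' > 1`, then `T'` has the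
pony-tail. -/
theorem stmt_9 (T T' : OTree) (h : Copying T T')
    (h1 : T.rpl = 1) (h2 : 1 < T'.rpl) :
    T'.ponyTail := by
  obtain ⟨j, hne, hj1, hj2, hrpl, happ⟩ := h
  rw [h1] at hj2
  have hj : j = 2 := by omega
  subst hj
  obtain ⟨ts⟩ := T
  cases ts with
  | nil => simp [OTree.rpl] at h1
  | cons t ts =>
    obtain ⟨cs⟩ := t
    cases cs with
    | cons c cs => simp [OTree.rpl] at h1
    | nil =>
      have hC : (OTree.node (OTree.node [] :: ts)).C 2 =
          OTree.node (OTree.node [OTree.node []] :: ts) := rfl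
      rw [hC] at happ
      obtain ⟨T's⟩ := T'
      rcases appendLeaf_inv happ with ⟨l, r, hl, hs⟩ | ⟨l, r, t, t', hl, hs, ht⟩
      · cases l with
        | nil => simp at hl
        | cons a l =>
          simp only [List.cons_append, List.cons.injEq] at hl
          obtain ⟨rfl, -⟩ := hl
          obtain ⟨rfl⟩ := hs
          trivial
      · cases l with
        | nil =>
          simp only [List.nil_append, List.cons.injEq] at hl
          obtain ⟨rfl, rfl⟩ := hl
          obtain ⟨rfl⟩ := hs
          rcases appendLeaf_inv ht with ⟨l', r', hl', hs'⟩ | ⟨l', r', u, u', hl', hs', hu⟩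
          · cases l' with
            | nil =>
              simp only [List.nil_append] at hl' hs'
              obtain ⟨-, rfl⟩ := List.cons.inj hl'
              subst hs'
              simp [OTree.rpl] at hrpl
            | cons a l' =>
              simp only [List.cons_append, List.cons.injEq] at hl'
              obtain ⟨rfl, h'⟩ := hl'
              simp at h'
          · cases l' with
            | nil =>
              simp only [List.nil_append, List.cons.injEq] at hl'
              obtain ⟨rfl, rfl⟩ := hl'
              exact absurd hu (appendLeaf_ne_nil u)
            | cons a l' =>
              simp only [List.cons_append, List.cons.injEq] at hl'
              obtain ⟨rfl, h'⟩ := hl'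
              simp at h'
        | cons a l =>
          simp only [List.cons_append, List.cons.injEq] at hl
          obtain ⟨rfl, -⟩ := hl
          obtain ⟨rfl⟩ := hs
          trivial
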